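/- arXiv:math/0306220 — 2 statements merged into one kernel-verified Lean document; each statement's English description precedes it below -/
import Mathlib

section
/- Let f : M → ℂ^P and g : M → ℂ^Q be functions and define R(z,w) = Σ_{p=1}^P f_p(z)·conj(f_p(w)) − Σ_{q=1}^Q g_q(z)·conj(g_q(w)). Then R ∈ 𝒫_k(M) if and only if for every j with 1 ≤ j ≤ k and every choice of j points z_1, …, z_j ∈ M, one has Σ_{m=0}^j (−1)^m Σ_{A,B} |det M_{A,B}(z)|² ≥ 0, where the inner sum is over all subsets A ⊆ {1,…,P} with |A| = j−m and B ⊆ {1,…,Q} with |B| = m, and M_{A,B}(z) is the j×j matrix whose columns are the vectors (f_a(z_1), …, f_a(z_j)) for a ∈ A together with the vectors (g_b(z_1), …, g_b(z_j)) for b ∈ B. -/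
/-!
Let `F` be the `j × (P + Q)` matrix with rows `(f(z_i), g(z_i))` and `J = diag(1, …, 1, -1, …, -1)`.
Then `(R(z_i, z_l))_{i,l} = F J Fᴴ`, so by Cauchy–Binet its determinant is
`Σ_S det(J_S) |det F_S|²` over the `j`-element sets `S` of columns, which is the alternating sum
of the statement once `S` is split into `A ⊔ B`.

`R ∈ 𝒫_k` says that every `k`-point matrix `(R(z_i, z_l))` is positive semidefinite. Points may
repeat, so the principal minors of these matrices are exactly the `j`-point determinants with
`j ≤ k`, and a Hermitian matrix is positive semidefinite iff its principal minors are
nonnegative: an eigenvalue `-t < 0` would make `det (T + t) = Σ_s t^{k - |s|} det T_s ≥ t^k`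
vanish.
-/

open scoped ComplexOrder

/-- `R ∈ 𝒫_N(M)`: for all points `z_1, …, z_N ∈ M` and scalars `a_1, …, a_N ∈ ℂ`,
the sum `Σ_{i,j} R(z_i, z_j) a_i conj(a_j)` is a nonnegative real number. -/
def InP {M : Type*} (N : ℕ) (R : M × M → ℂ) : Prop :=
  ∀ (z : Fin N → M) (a : Fin N → ℂ),
    0 ≤ ∑ i, ∑ j, R (z i, z j) * a i * (starRingEnd ℂ) (a j)

/-- Given component functions `f : M → ℂ^P`, `g : M → ℂ^Q`, points `z_1, …, z_j`, and
subsets `A ⊆ {1,…,P}`, `B ⊆ {1,…,Q}` with `|A| + |B| = j`, this is the determinant of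
the `j × j` matrix `M_{A,B}(z)` whose columns are the vectors `(f_a(z_1), …, f_a(z_j))`
for `a ∈ A` together with `(g_b(z_1), …, g_b(z_j))` for `b ∈ B` (in some order; the
squared absolute value of the determinant does not depend on the ordering). -/
noncomputable def subDet {M : Type*} {P Q k : ℕ} (f : M → Fin P → ℂ) (g : M → Fin Q → ℂ)
    (z : Fin k → M) (A : Finset (Fin P)) (B : Finset (Fin Q)) : ℂ :=
  if h : Fintype.card (↥A ⊕ ↥B) = k then
    Matrix.det (Matrix.of fun i j =>
      Sum.elim (fun a : ↥A => f (z i) a) (fun b : ↥B => g (z i) b)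
        ((Fintype.equivFinOfCardEq h).symm j))
  else 0

open Finset Matrix

section Enumeration

variable {n ι : Type*} [Fintype n]

theorem Finset.exists_perm_comp_eq {S : Finset ι} (hS : #S = Fintype.card n) {u p : n → ι}
    (hu : u.Injective) (hp : p.Injective) (huS : ∀ i, u i ∈ S) (hpS : ∀ i, p i ∈ S) :
    ∃ σ : Equiv.Perm n, u ∘ σ = p := by
  have bijective {v : n → ι} (hv : v.Injective) (hvS : ∀ i, v i ∈ S) :
      Function.Bijective fun i => (⟨v i, hvS i⟩ : S) :=
    (Fintype.bijective_iff_injective_and_card _).mpr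
      ⟨fun i l h => hv (congrArg Subtype.val h), by simp [hS]⟩
  let eu := Equiv.ofBijective _ (bijective hu huS)
  let ep := Equiv.ofBijective _ (bijective hp hpS)
  exact ⟨ep.trans eu.symm, funext fun i => congrArg Subtype.val (eu.apply_symm_apply (ep i))⟩

/-- An injection `p : n → ι` factors uniquely as `u S ∘ σ`, where `S` is its image. -/
theorem Finset.sum_injective_eq_sum_sum_perm [DecidableEq n] [Fintype ι] [DecidableEq ι] {β : Type*}
    [AddCommMonoid β] (u : {S : Finset ι // #S = Fintype.card n} → n → ι)
    (hu_inj : ∀ S, (u S).Injective) (hu_mem : ∀ S i, u S i ∈ S.1) (F : (n → ι) → β) :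
    ∑ p : n → ι with p.Injective, F p = ∑ S, ∑ σ : Equiv.Perm n, F (u S ∘ σ) := by
  rw [← Fintype.sum_prod_type']
  symm
  refine sum_bij (fun x _ => u x.1 ∘ x.2)
    (fun x _ => by simpa using (hu_inj x.1).comp x.2.injective) ?_ ?_ fun _ _ => rfl
  · rintro ⟨S, σ⟩ - ⟨S', σ'⟩ - h
    have image_eq (S) (σ : Equiv.Perm n) : univ.image (u S ∘ σ) = S.1 :=
      eq_of_subset_of_card_le (by simp [subset_iff, hu_mem])
        (by rw [card_image_of_injective _ ((hu_inj S).comp σ.injective), S.2, card_univ])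
    obtain rfl : S = S' := Subtype.ext (by rw [← image_eq S σ, ← image_eq S' σ', h])
    simpa using (hu_inj S).comp_left h
  · intro p hp
    rw [mem_filter_univ] at hp
    have hcard : #(univ.image p) = Fintype.card n := by
      rw [card_image_of_injective _ hp, card_univ]
    obtain ⟨σ, hσ⟩ :=
      exists_perm_comp_eq hcard (hu_inj ⟨_, hcard⟩) hp (hu_mem ⟨_, hcard⟩) (by simp)
    exact ⟨(⟨_, hcard⟩, σ), mem_univ _, hσ⟩

end Enumeration

theorem Finset.sum_subtype_card_eq_sum_toLeft_toRight {α β γ : Type*} [Fintype α] [Fintype β]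
    [DecidableEq α] [DecidableEq β] [AddCommMonoid γ] (k : ℕ) (φ : Finset α → Finset β → γ) :
    ∑ S : {S : Finset (α ⊕ β) // #S = k}, φ S.1.toLeft S.1.toRight =
      ∑ m ∈ range (k + 1), ∑ A ∈ univ.powersetCard (k - m), ∑ B ∈ univ.powersetCard m, φ A B := by
  rw [← sum_subtype (univ.powersetCard k) (fun S => by simp) fun S => φ S.toLeft S.toRight]
  conv_rhs => enter [2, m]; rw [← sum_product']
  rw [sum_sigma']
  refine sum_nbij' (fun S => ⟨#S.toRight, S.toLeft, S.toRight⟩)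
    (fun x => x.2.1.disjSum x.2.2) ?_ ?_ (fun S _ => toLeft_disjSum_toRight) ?_ fun S _ => rfl
  · intro S hS
    have := card_toLeft_add_card_toRight (u := S)
    simp only [mem_sigma, mem_product, mem_powersetCard_univ, mem_range, and_true] at hS ⊢
    omega
  · rintro ⟨m, A, B⟩ h
    simp only [mem_sigma, mem_product, mem_powersetCard_univ, mem_range, card_disjSum] at h ⊢
    omega
  · rintro ⟨m, A, B⟩ h
    simp only [mem_sigma, mem_product, mem_powersetCard_univ] at h
    simp [h.2.2]

namespace Matrix

section CauchyBinet

variable {R n ι : Type*} [CommRing R] [Fintype n] [DecidableEq n] [Fintype ι]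

theorem det_mul_eq_sum_det_submatrix_mul_prod (A : Matrix n ι R) (B : Matrix ι n R) :
    det (A * B) = ∑ p : n → ι, det (A.submatrix id p) * ∏ i, B (p i) i := by
  simp only [det_apply', mul_apply, prod_univ_sum, mul_sum, Fintype.piFinset_univ, sum_mul,
    prod_mul_distrib, submatrix_apply, id, mul_assoc]
  exact sum_comm

variable [DecidableEq ι]

theorem det_mul_eq_sum_injective (A : Matrix n ι R) (B : Matrix ι n R) :
    det (A * B) = ∑ p : n → ι with p.Injective, det (A.submatrix id p) * ∏ i, B (p i) i := by
  rw [det_mul_eq_sum_det_submatrix_mul_prod, sum_filter_of_ne]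
  intro p _ hp
  by_contra hinj
  obtain ⟨i, l, hil, hne⟩ : ∃ i l, p i = p l ∧ i ≠ l := by
    simpa [Function.Injective] using hinj
  exact hp <| by rw [det_zero_of_column_eq hne (by simp [hil]), zero_mul]

/-- The Cauchy–Binet formula. -/
theorem det_mul_eq_sum_det_mul_det (A : Matrix n ι R) (B : Matrix ι n R)
    (u : {S : Finset ι // #S = Fintype.card n} → n → ι) (hu_inj : ∀ S, (u S).Injective)
    (hu_mem : ∀ S i, u S i ∈ S.1) :
    det (A * B) = ∑ S, det (A.submatrix id (u S)) * det (B.submatrix (u S) id) := by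
  rw [det_mul_eq_sum_injective, sum_injective_eq_sum_sum_perm u hu_inj hu_mem]
  refine Fintype.sum_congr _ _ fun S => ?_
  simp only [det_apply' (B.submatrix (u S) id), mul_sum]
  refine Fintype.sum_congr _ _ fun σ => ?_
  rw [show A.submatrix id (u S ∘ σ) = (A.submatrix id (u S)).submatrix id σ from rfl,
    det_permute']
  simp [mul_comm, mul_left_comm]

end CauchyBinet

variable {n : Type*} [Fintype n] [DecidableEq n]

theorem det_add_smul_one {R : Type*} [CommRing R] (A : Matrix n n R) (c : R) :
    det (A + c • 1) = ∑ s : Finset n, c ^ #sᶜ * det (A.submatrix ((↑) : s → n) (↑)) := by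
  change detRowAlternating (A.row + (c • 1 : Matrix n n R).row) = _
  rw [AlternatingMap.map_add_univ]
  refine Fintype.sum_congr _ _ fun s => ?_
  have hrows : s.piecewise A.row (c • 1 : Matrix n n R).row =
      fun i => (if i ∈ s then 1 else c) • s.piecewise A.row (1 : Matrix n n R).row i := by
    ext i j
    by_cases hi : i ∈ s <;> simp [hi]
  rw [hrows, AlternatingMap.map_smul_univ, prod_ite, prod_const_one, prod_const, one_mul,
    ← det_piecewise_one_eq_submatrix_det, smul_eq_mul]
  congr 2
  simp [compl_eq_univ_sdiff, filter_not]

/-- Sylvester's criterion for semidefiniteness. -/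
theorem IsHermitian.posSemidef_of_det_submatrix_nonneg {𝕜 : Type*} [RCLike 𝕜]
    {A : Matrix n n 𝕜} (hA : A.IsHermitian)
    (h : ∀ s : Finset n, 0 ≤ det (A.submatrix ((↑) : s → n) (↑))) : A.PosSemidef := by
  rw [hA.posSemidef_iff_eigenvalues_nonneg]
  intro i
  by_contra hneg
  set t : ℝ := -hA.eigenvalues i
  have ht : 0 < t := by simp only [Pi.zero_apply, not_le] at hneg; linarith
  have hsingular : det (A + (t : 𝕜) • 1) = 0 := by
    rw [← exists_mulVec_eq_zero_iff]
    refine ⟨hA.eigenvectorBasis i, fun h0 => hA.eigenvectorBasis.orthonormal.ne_zero i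
      (PiLp.ext (congrFun h0)), ?_⟩
    rw [add_mulVec, smul_mulVec, one_mulVec, hA.mulVec_eigenvectorBasis]
    simp [t, ← RCLike.real_smul_eq_coe_smul (K := 𝕜)]
  have hpos : 0 < det (A + (t : 𝕜) • 1) := by
    rw [det_add_smul_one]
    refine sum_pos' (fun s _ => mul_nonneg (pow_nonneg (by positivity) _) (h s))
      ⟨∅, mem_univ _, ?_⟩
    simpa using pow_pos (RCLike.ofReal_pos.mpr ht) _
  exact hpos.ne' hsingular

end Matrix

section Kernel

variable {M : Type*} {R : M × M → ℂ}

def kernelMatrix {n : Type*} (R : M × M → ℂ) (z : n → M) : Matrix n n ℂ :=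
  of fun i l => R (z i, z l)

theorem kernelMatrix_comp {m n : Type*} (z : n → M) (e : m → n) :
    kernelMatrix R (z ∘ e) = (kernelMatrix R z).submatrix e e :=
  rfl

theorem isHermitian_kernelMatrix (hR : ∀ z w, star (R (z, w)) = R (w, z)) {n : Type*}
    (z : n → M) : (kernelMatrix R z).IsHermitian :=
  ext fun i l => hR (z l) (z i)

theorem inP_iff_forall_posSemidef (hR : ∀ z w, star (R (z, w)) = R (w, z)) {N : ℕ} :
    InP N R ↔ ∀ z : Fin N → M, (kernelMatrix R z).PosSemidef := by
  have quadratic_form (z : Fin N → M) (a : Fin N → ℂ) :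
      ∑ i, ∑ l, R (z i, z l) * a i * (starRingEnd ℂ) (a l) =
        star (star a) ⬝ᵥ (kernelMatrix R z *ᵥ star a) := by
    simp only [dotProduct, mulVec, kernelMatrix, of_apply, mul_sum, Pi.star_apply,
      RCLike.star_def, Complex.conj_conj]
    exact sum_congr rfl fun i _ => sum_congr rfl fun l _ => by ring
  simp only [InP, posSemidef_iff_dotProduct_mulVec, isHermitian_kernelMatrix hR, true_and,
    quadratic_form]
  exact forall_congr' fun z => ⟨fun h x => by simpa using h (star x), fun h a => h _⟩

theorem inP_iff_forall_det_nonneg (hR : ∀ z w, star (R (z, w)) = R (w, z)) {k : ℕ} :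
    InP k R ↔ ∀ j, 1 ≤ j → j ≤ k → ∀ z : Fin j → M, 0 ≤ det (kernelMatrix R z) := by
  rw [inP_iff_forall_posSemidef hR]
  constructor
  · intro hpsd j hj hjk z
    rw [← Function.extend_comp (Fin.castLE_injective hjk) z fun _ => z ⟨0, hj⟩,
      kernelMatrix_comp]
    exact ((hpsd _).submatrix _).det_nonneg
  · intro hdet z
    refine (isHermitian_kernelMatrix hR z).posSemidef_of_det_submatrix_nonneg fun s => ?_
    rw [← kernelMatrix_comp]
    rcases s.eq_empty_or_nonempty with rfl | hs
    · simp [det_isEmpty]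
    · rw [← det_submatrix_equiv_self s.equivFin.symm, ← kernelMatrix_comp]
      exact hdet _ hs.card_pos (card_le_univ s |>.trans_eq (Fintype.card_fin k)) _

end Kernel

section Signature

variable {M α β : Type*}

def valueMatrix {n : Type*} (f : M → α → ℂ) (g : M → β → ℂ) (z : n → M) :
    Matrix n (α ⊕ β) ℂ :=
  of fun i => Sum.elim (f (z i)) (g (z i))

def signature (α β : Type*) : α ⊕ β → ℂ :=
  Sum.elim 1 (-1)

theorem kernelMatrix_eq_valueMatrix_mul [Fintype α] [Fintype β] [DecidableEq α] [DecidableEq β]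
    {R : M × M → ℂ} {f : M → α → ℂ} {g : M → β → ℂ}
    (hR : ∀ z w, R (z, w) = ∑ p, f z p * (starRingEnd ℂ) (f w p) -
      ∑ q, g z q * (starRingEnd ℂ) (g w q)) {n : Type*} (z : n → M) :
    kernelMatrix R z =
      valueMatrix f g z * diagonal (signature α β) * (valueMatrix f g z)ᴴ := by
  ext i l
  rw [mul_apply]
  simp [kernelMatrix, valueMatrix, signature, Fintype.sum_sum_type, hR, sub_eq_add_neg]

theorem star_apply_eq_apply_swap [Fintype α] [Fintype β] {R : M × M → ℂ} {f : M → α → ℂ}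
    {g : M → β → ℂ} (hR : ∀ z w, R (z, w) = ∑ p, f z p * (starRingEnd ℂ) (f w p) -
      ∑ q, g z q * (starRingEnd ℂ) (g w q)) (z w : M) : star (R (z, w)) = R (w, z) := by
  simp [hR, mul_comm]

noncomputable def columnEnum {k : ℕ} (A : Finset α) (B : Finset β)
    (h : Fintype.card (A ⊕ B) = k) : Fin k → α ⊕ β :=
  Sum.map (↑) (↑) ∘ (Fintype.equivFinOfCardEq h).symm

theorem columnEnum_injective {k : ℕ} (A : Finset α) (B : Finset β)
    (h : Fintype.card (A ⊕ B) = k) : (columnEnum A B h).Injective :=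
  (Subtype.val_injective.sumMap Subtype.val_injective).comp (Equiv.injective _)

theorem columnEnum_mem_disjSum {k : ℕ} (A : Finset α) (B : Finset β)
    (h : Fintype.card (A ⊕ B) = k) (i : Fin k) : columnEnum A B h i ∈ A.disjSum B := by
  simp only [columnEnum, Function.comp_apply]
  cases (Fintype.equivFinOfCardEq h).symm i <;> simp

theorem prod_signature_columnEnum {k : ℕ} (A : Finset α) (B : Finset β)
    (h : Fintype.card (A ⊕ B) = k) : ∏ i, signature α β (columnEnum A B h i) = (-1) ^ #B := by
  simp only [columnEnum, Function.comp_apply]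
  rw [Equiv.prod_comp (Fintype.equivFinOfCardEq h).symm
    fun x => signature α β (Sum.map (↑) (↑) x)]
  simp [signature, Fintype.prod_sum_type]

end Signature

section SubDet

variable {M : Type*} {P Q k : ℕ} (f : M → Fin P → ℂ) (g : M → Fin Q → ℂ) (z : Fin k → M)

theorem subDet_eq_det_submatrix (A : Finset (Fin P)) (B : Finset (Fin Q))
    (h : Fintype.card (A ⊕ B) = k) :
    subDet f g z A B = det ((valueMatrix f g z).submatrix id (columnEnum A B h)) := by
  rw [subDet, dif_pos h]
  congr 1
  ext i l
  simp only [of_apply, submatrix_apply, valueMatrix, columnEnum, Function.comp_apply, id]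
  cases (Fintype.equivFinOfCardEq h).symm l <;> rfl

theorem det_mul_det_eq_normSq_subDet (A : Finset (Fin P)) (B : Finset (Fin Q))
    (h : Fintype.card (A ⊕ B) = k) :
    det ((valueMatrix f g z * diagonal (signature (Fin P) (Fin Q))).submatrix id
        (columnEnum A B h)) * det ((valueMatrix f g z)ᴴ.submatrix (columnEnum A B h) id) =
      (-1) ^ #B * Complex.normSq (subDet f g z A B) := by
  have hsigned : (valueMatrix f g z * diagonal (signature (Fin P) (Fin Q))).submatrix id
      (columnEnum A B h) = (valueMatrix f g z).submatrix id (columnEnum A B h) *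
        diagonal (signature (Fin P) (Fin Q) ∘ columnEnum A B h) := by
    ext i l
    rw [submatrix_apply, mul_diagonal, mul_diagonal]
    rfl
  rw [hsigned, det_mul, det_diagonal, ← conjTranspose_submatrix, det_conjTranspose,
    Function.comp_def, prod_signature_columnEnum, ← subDet_eq_det_submatrix, RCLike.star_def,
    mul_right_comm, Complex.mul_conj, mul_comm]

theorem det_kernelMatrix_eq_sum_normSq_subDet {R : M × M → ℂ}
    (hR : ∀ z w, R (z, w) = ∑ p, f z p * (starRingEnd ℂ) (f w p) -
      ∑ q, g z q * (starRingEnd ℂ) (g w q)) :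
    det (kernelMatrix R z) = ((∑ m ∈ range (k + 1), (-1 : ℝ) ^ m *
      ∑ A ∈ univ.powersetCard (k - m), ∑ B ∈ univ.powersetCard m,
        Complex.normSq (subDet f g z A B) : ℝ) : ℂ) := by
  have hcard (S : {S : Finset (Fin P ⊕ Fin Q) // #S = Fintype.card (Fin k)}) :
      Fintype.card (S.1.toLeft ⊕ S.1.toRight) = k := by
    rw [Fintype.card_sum, Fintype.card_coe, Fintype.card_coe, card_toLeft_add_card_toRight, S.2,
      Fintype.card_fin]
  rw [kernelMatrix_eq_valueMatrix_mul hR, det_mul_eq_sum_det_mul_det _ _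
    (fun S => columnEnum _ _ (hcard S)) (fun S => columnEnum_injective _ _ _)
    fun S i => by simpa only [toLeft_disjSum_toRight] using columnEnum_mem_disjSum _ _ (hcard S) i,
    Fintype.sum_congr _ _ fun S => det_mul_det_eq_normSq_subDet f g z _ _ (hcard S),
    sum_subtype_card_eq_sum_toLeft_toRight (Fintype.card (Fin k))
    fun A B => (-1) ^ #B * (Complex.normSq (subDet f g z A B) : ℂ), Fintype.card_fin]
  push_cast
  refine sum_congr rfl fun m _ => ?_
  rw [mul_sum]
  refine sum_congr rfl fun A _ => ?_
  rw [mul_sum]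
  exact sum_congr rfl fun B hB => by rw [mem_powersetCard_univ.mp hB]

end SubDet

theorem stmt4_general {M : Type*} (P Q k : ℕ)
    (f : M → Fin P → ℂ) (g : M → Fin Q → ℂ) (R : M × M → ℂ)
    (hR : ∀ z w : M, R (z, w) =
      ∑ p, f z p * (starRingEnd ℂ) (f w p) - ∑ q, g z q * (starRingEnd ℂ) (g w q)) :
    InP k R ↔
      ∀ j : ℕ, 1 ≤ j → j ≤ k → ∀ z : Fin j → M,
        0 ≤ ∑ m ∈ Finset.range (j + 1), (-1 : ℝ) ^ m *
          ∑ A ∈ Finset.univ.powersetCard (j - m), ∑ B ∈ Finset.univ.powersetCard m,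
            Complex.normSq (subDet f g z A B) := by
  rw [inP_iff_forall_det_nonneg (star_apply_eq_apply_swap hR)]
  refine forall₄_congr fun j _ _ z => ?_
  rw [det_kernelMatrix_eq_sum_normSq_subDet f g z hR, Complex.zero_le_real]

/-- Proposition 1: `R ∈ 𝒫_k` iff
`Σ_{m=0}^j (−1)^m Σ_{|A|=j−m,|B|=m} |det M_{A,B}(z)|² ≥ 0` for all `1 ≤ j ≤ k`
and all choices of `j` points. -/
theorem stmt4 {M : Type*} (P Q k : ℕ) (hk : 1 ≤ k)
    (f : M → Fin P → ℂ) (g : M → Fin Q → ℂ) (R : M × M → ℂ)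
    (hR : ∀ z w : M, R (z, w) =
      ∑ p, f z p * (starRingEnd ℂ) (f w p) - ∑ q, g z q * (starRingEnd ℂ) (g w q)) :
    InP k R ↔
      ∀ j : ℕ, 1 ≤ j → j ≤ k → ∀ z : Fin j → M,
        0 ≤ ∑ m ∈ Finset.range (j + 1), (-1 : ℝ) ^ m *
          ∑ A ∈ Finset.univ.powersetCard (j - m), ∑ B ∈ Finset.univ.powersetCard m,
            Complex.normSq (subDet f g z A B) :=
  stmt4_general P Q k f g R hR
end

section
/- Let m be a positive integer and λ ∈ ℝ, and define R_λ : ℂ² × ℂ² → ℂ by R_λ(z,w) = (z₁·conj(w₁) + z₂·conj(w₂))^{2m} − λ·(z₁·z₂·conj(w₁)·conj(w₂))^m. If R_λ ∈ 𝒫_m(ℂ²), then λ ≤ binom(2m, m) + 2, where binom(2m, m) is the central binomial coefficient. Moreover R_λ ∈ 𝒫_m(ℂ²) does hold for λ = binom(2m, m) + 2, while R_λ ∉ 𝒫_{m+1}(ℂ²) for that value of λ; consequently 𝒫_m(ℂ²) ≠ 𝒫_{m+1}(ℂ²), and the family S_{λ,m} = {R_λ : λ ∈ ℝ} has stability index m+1.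 -/
open scoped ComplexOrder

/-- The perturbed Fubini–Study family:
`R_λ(z,w) = ⟨z,w⟩^{2m} − λ (z₁ z₂ conj(w₁) conj(w₂))^m` on `ℂ² × ℂ²`. -/
noncomputable def Rlam (m : ℕ) (lam : ℝ) : (ℂ × ℂ) × (ℂ × ℂ) → ℂ :=
  fun p =>
    (p.1.1 * (starRingEnd ℂ) p.2.1 + p.1.2 * (starRingEnd ℂ) p.2.2) ^ (2 * m)
      - (lam : ℂ) * (p.1.1 * p.1.2 * (starRingEnd ℂ) p.2.1 * (starRingEnd ℂ) p.2.2) ^ m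


/-!
With `v_k = Σ_i a_i x_i^k y_i^(2m-k)`, the Hermitian form of `R_λ` at the points `(x_i, y_i)` with
weights `a_i` is `Σ_k C(2m,k) |v_k|² - λ |v_m|²`. At the `N`-th roots of unity with weights
`ζ^(e i)` only the moments with `N ∣ e + k` survive: for `N = m`, `e = 0` these are `k = 0, m, 2m`,
which forces `λ ≤ C(2m,m) + 2`; for `N = m + 1`, `e = 1` only `k = m` is left, which forces
`λ ≤ C(2m,m)`, and that bound is clearly sufficient for every `N`.

For `N = m` points the `(m+1) × (m+1)` Hankel matrix `(v_{j+l})` is singular. A kernel vector `p`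
gives `Σ_{k,l} conj(p_k) p_l v_{m-k+l} = 0`, whose diagonal part is `‖p‖² v_m`. Cauchy–Schwarz
over the off-diagonal pairs, weighted by `#{(k,l) : m-k+l = s} / C(2m,s)` (which is at most `1/2`
unless `s = 0, 2m`), gives `2 |v_m|² ≤ Σ_{k ≠ m} C(2m,k) |v_k|²`, so `λ = C(2m,m) + 2` is allowed.
-/

open Finset Complex ComplexConjugate

theorem Nat.self_le_choose {n s : ℕ} (h0 : 0 < s) (hs : s < n) : n ≤ n.choose s := by
  induction n generalizing s with
  | zero => omega
  | succ n ih =>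
    rcases s with _ | _ | t
    · omega
    · simp
    · have := ih (s := t + 1) (by omega) (by omega)
      have := Nat.choose_pos (show t + 1 + 1 ≤ n by omega)
      rw [Nat.choose_succ_succ']
      omega

theorem Finset.sum_product_eq_sum_diag_add_sum_offDiag {α M : Type*} [DecidableEq α]
    [AddCommMonoid M] (s : Finset α) (f : α × α → M) :
    ∑ q ∈ s ×ˢ s, f q = ∑ i ∈ s, f (i, i) + ∑ q ∈ s.offDiag, f q := by
  rw [← diag_union_offDiag, sum_union (disjoint_diag_offDiag s), sum_diag]

theorem Finset.sum_offDiag_mul_eq_sq_sub_sum_sq {α R : Type*} [DecidableEq α] [CommRing R]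
    (s : Finset α) (f : α → R) :
    ∑ q ∈ s.offDiag, f q.1 * f q.2 = (∑ i ∈ s, f i) ^ 2 - ∑ i ∈ s, f i ^ 2 := by
  rw [sq, sum_mul_sum, ← sum_product', sum_product_eq_sum_diag_add_sum_offDiag]
  simp only [sq, add_sub_cancel_left]

theorem IsPrimitiveRoot.sum_pow_mul_eq_ite {K : Type*} [Field K] {ζ : K} {n : ℕ}
    (hζ : IsPrimitiveRoot ζ n) (k : ℕ) :
    ∑ i : Fin n, ζ ^ (k * i) = if n ∣ k then (n : K) else 0 := by
  simp_rw [pow_mul]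
  rw [Fin.sum_univ_eq_sum_range (fun i => (ζ ^ k) ^ i)]
  split_ifs with hdvd
  · simp [(hζ.pow_eq_one_iff_dvd k).2 hdvd]
  · have hk : ζ ^ k ≠ 1 := mt (hζ.pow_eq_one_iff_dvd k).1 hdvd
    rw [geom_sum_eq hk, ← pow_mul, mul_comm, pow_mul, hζ.pow_eq_one, one_pow, sub_self, zero_div]

theorem InP.mono {M : Type*} [Nonempty M] {R : M × M → ℂ} {k N : ℕ} (h : InP N R)
    (hkN : k ≤ N) : InP k R := by
  obtain ⟨d, rfl⟩ := Nat.exists_eq_add_of_le hkN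
  intro z a
  simpa [Fin.sum_univ_add] using
    h (Fin.append z fun _ => Classical.arbitrary M) (Fin.append a 0)

noncomputable def veroneseMoment (m : ℕ) {N : ℕ} (z : Fin N → ℂ × ℂ) (a : Fin N → ℂ)
    (k : ℕ) : ℂ :=
  ∑ i, a i * (z i).1 ^ k * (z i).2 ^ (2 * m - k)

theorem sum_sum_mul_conj_eq_normSq {ι : Type*} [Fintype ι] (f : ι → ℂ) :
    ∑ i, ∑ j, f i * conj (f j) = (normSq (∑ i, f i) : ℂ) := by
  rw [← mul_conj, map_sum, sum_mul_sum]

theorem sum_Rlam_mul_mul_conj_eq (m : ℕ) (lam : ℝ) {N : ℕ} (z : Fin N → ℂ × ℂ) (a : Fin N → ℂ) :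
    ∑ i, ∑ j, Rlam m lam (z i, z j) * a i * conj (a j) =
      ((∑ k ∈ range (2 * m + 1), (Nat.choose (2 * m) k : ℝ) * normSq (veroneseMoment m z a k)
        - lam * normSq (veroneseMoment m z a m) : ℝ) : ℂ) := by
  set g : ℕ → Fin N → ℂ := fun k i => a i * (z i).1 ^ k * (z i).2 ^ (2 * m - k)
  have hterm (i j : Fin N) : Rlam m lam (z i, z j) * a i * conj (a j) =
      ∑ k ∈ range (2 * m + 1), (Nat.choose (2 * m) k : ℂ) * (g k i * conj (g k j))
        - lam * (g m i * conj (g m j)) := by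
    have hm : 2 * m - m = m := by omega
    simp only [Rlam, g, add_pow, sub_mul, sum_mul, map_mul, map_pow, hm, mul_pow]
    congr 1
    · exact sum_congr rfl fun k _ => by ring
    · ring
  have hg (k : ℕ) : ∑ i, ∑ j, g k i * conj (g k j) = (normSq (veroneseMoment m z a k) : ℂ) :=
    sum_sum_mul_conj_eq_normSq (g k)
  push_cast
  simp only [hterm, sum_sub_distrib, ← hg, mul_sum]
  congr 1
  rw [sum_congr rfl fun i _ => sum_comm]
  exact sum_comm

theorem InP_Rlam_iff {m N : ℕ} {lam : ℝ} :
    InP N (Rlam m lam) ↔ ∀ (z : Fin N → ℂ × ℂ) (a : Fin N → ℂ),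
      lam * normSq (veroneseMoment m z a m) ≤
        ∑ k ∈ range (2 * m + 1), (Nat.choose (2 * m) k : ℝ) * normSq (veroneseMoment m z a k) := by
  simp only [InP, sum_Rlam_mul_mul_conj_eq, zero_le_real, sub_nonneg]

theorem veroneseMoment_rootsOfUnity {m n : ℕ} {ζ : ℂ} (hζ : IsPrimitiveRoot ζ n) (e k : ℕ) :
    veroneseMoment m (fun i : Fin n => (ζ ^ (i : ℕ), 1)) (fun i => ζ ^ (e * i)) k =
      if n ∣ e + k then (n : ℂ) else 0 := by
  rw [← hζ.sum_pow_mul_eq_ite]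
  refine sum_congr rfl fun i _ => ?_
  simp only [one_pow, mul_one, ← pow_mul, ← pow_add, add_mul, mul_comm k]

theorem le_sum_choose_of_InP_Rlam {m n : ℕ} {lam : ℝ} (hn : 0 < n) (h : InP n (Rlam m lam))
    (e : ℕ) (he : n ∣ e + m) :
    lam ≤ ∑ k ∈ range (2 * m + 1) with n ∣ e + k, (Nat.choose (2 * m) k : ℝ) := by
  obtain ⟨ζ, hζ⟩ : ∃ ζ : ℂ, IsPrimitiveRoot ζ n := ⟨_, isPrimitiveRoot_exp n hn.ne'⟩
  have := InP_Rlam_iff.1 h (fun i => (ζ ^ (i : ℕ), 1)) (fun i => ζ ^ (e * i))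
  simp only [veroneseMoment_rootsOfUnity hζ, if_pos he, apply_ite normSq, normSq_natCast,
    map_zero, mul_ite, mul_zero, ← sum_filter, ← sum_mul] at this
  exact le_of_mul_le_mul_right this (by positivity)

theorem range_filter_dvd_eq {m : ℕ} (hm : 0 < m) :
    {k ∈ range (2 * m + 1) | m ∣ k} = {0, m, 2 * m} := by
  ext k
  simp only [mem_filter, mem_range, mem_insert, mem_singleton]
  constructor
  · rintro ⟨hk, c, rfl⟩
    have : c < 3 := Nat.lt_of_mul_lt_mul_left (a := m) (by omega)
    interval_cases c <;> simp [mul_comm]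
  · rintro (rfl | rfl | rfl) <;> simp; omega

theorem range_filter_succ_dvd_one_add_eq (m : ℕ) :
    {k ∈ range (2 * m + 1) | m + 1 ∣ 1 + k} = {m} := by
  ext k
  simp only [mem_filter, mem_range, mem_singleton]
  constructor
  · rintro ⟨hk, c, hc⟩
    have : c < 2 := Nat.lt_of_mul_lt_mul_left (a := m + 1) (by omega)
    interval_cases c <;> omega
  · rintro rfl
    exact ⟨by omega, 1, by ring⟩

theorem le_choose_add_two_of_InP_Rlam {m : ℕ} {lam : ℝ} (hm : 0 < m) (h : InP m (Rlam m lam)) :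
    lam ≤ Nat.choose (2 * m) m + 2 := by
  have := le_sum_choose_of_InP_Rlam hm h 0 (by simp)
  simp only [zero_add] at this
  rw [range_filter_dvd_eq hm, sum_insert (by simp; omega), sum_pair (by omega)] at this
  simp only [Nat.choose_zero_right, Nat.choose_self, Nat.cast_one] at this
  linarith

theorem le_choose_of_InP_succ_Rlam {m : ℕ} {lam : ℝ} (h : InP (m + 1) (Rlam m lam)) :
    lam ≤ Nat.choose (2 * m) m := by
  simpa [range_filter_succ_dvd_one_add_eq] using
    le_sum_choose_of_InP_Rlam m.succ_pos h 1 (by rw [add_comm])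

theorem InP_Rlam_of_le_choose {m : ℕ} {lam : ℝ} (hlam : lam ≤ Nat.choose (2 * m) m) (N : ℕ) :
    InP N (Rlam m lam) := by
  refine InP_Rlam_iff.2 fun z a => ?_
  calc lam * normSq (veroneseMoment m z a m)
      ≤ Nat.choose (2 * m) m * normSq (veroneseMoment m z a m) :=
        mul_le_mul_of_nonneg_right hlam (normSq_nonneg _)
    _ ≤ _ := single_le_sum
          (f := fun k => (Nat.choose (2 * m) k : ℝ) * normSq (veroneseMoment m z a k))
          (fun k _ => mul_nonneg (Nat.cast_nonneg _) (normSq_nonneg _)) (by simp; omega)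

/-- `min s (2m - s) + 1` is the number of pairs `(k, l) ∈ [0, m]²` with `m - k + l = s`. -/
noncomputable def hankelWeight (m s : ℕ) : ℝ :=
  (min s (2 * m - s) + 1 : ℕ) / (Nat.choose (2 * m) s : ℝ)

theorem hankelWeight_pos {m s : ℕ} (hs : s ≤ 2 * m) : 0 < hankelWeight m s :=
  div_pos (by positivity) (by exact_mod_cast Nat.choose_pos hs)

theorem hankelWeight_le_half {m s : ℕ} (h0 : 0 < s) (h2m : s < 2 * m) (hsm : s ≠ m) :
    hankelWeight m s ≤ 1 / 2 := by
  have hchoose := Nat.self_le_choose h0 h2m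
  rw [hankelWeight, div_le_iff₀ (by exact_mod_cast Nat.choose_pos h2m.le)]
  have : 2 * (min s (2 * m - s) + 1) ≤ 2 * m := by omega
  have : (2 * (min s (2 * m - s) + 1) : ℕ) ≤ ((2 * m).choose s : ℝ) := by
    exact_mod_cast this.trans hchoose
  push_cast at this ⊢
  linarith

theorem hankelWeight_zero (m : ℕ) : hankelWeight m 0 = 1 := by
  simp [hankelWeight]

theorem hankelWeight_two_mul (m : ℕ) : hankelWeight m (2 * m) = 1 := by
  simp [hankelWeight]

theorem card_filter_sub_add_eq_le (m s : ℕ) :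
    #{q : Fin (m + 1) × Fin (m + 1) | m - q.1 + q.2 = s} ≤ min s (2 * m - s) + 1 := by
  rw [← card_range (min s (2 * m - s) + 1)]
  refine card_le_card_of_injOn (fun q => q.2 - (s - m)) (fun q hq => ?_) fun q hq q' hq' h => ?_
  · simp only [coe_filter, Set.mem_ofPred_eq, mem_univ, true_and] at hq
    simp only [coe_range, Set.mem_Iio]
    omega
  · simp only [coe_filter, Set.mem_ofPred_eq, mem_univ, true_and] at hq hq'
    simp only at h
    ext <;> omega

section Hankel

variable {m : ℕ} (p : Fin (m + 1) → ℂ) (v : ℕ → ℂ)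

theorem sum_offDiag_conj_mul_mul_eq (hrel : ∀ j ≤ m, ∑ l, p l * v (j + l) = 0) :
    ∑ q ∈ univ.offDiag, conj (p q.1) * p q.2 * v (m - q.1 + q.2) =
      -((∑ l, normSq (p l) : ℝ) : ℂ) * v m := by
  have htotal : ∑ q ∈ univ ×ˢ univ, conj (p q.1) * p q.2 * v (m - q.1 + q.2) = 0 := by
    rw [sum_product]
    refine sum_eq_zero fun k _ => ?_
    simp_rw [mul_assoc, ← mul_sum]
    rw [hrel _ (Nat.sub_le _ _), mul_zero]
  rw [sum_product_eq_sum_diag_add_sum_offDiag] at htotal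
  rw [neg_mul, eq_neg_iff_add_eq_zero, add_comm, ← htotal]
  congr 1
  push_cast
  rw [sum_mul]
  refine sum_congr rfl fun k _ => ?_
  rw [Nat.sub_add_cancel k.is_le, mul_comm (conj _), mul_conj]

theorem sum_offDiag_normSq_div_hankelWeight_le :
    ∑ q ∈ (univ : Finset (Fin (m + 1))).offDiag,
        normSq (v (m - q.1 + q.2)) / hankelWeight m (m - q.1 + q.2) ≤
      ∑ s ∈ (range (2 * m + 1)).erase m, (Nat.choose (2 * m) s : ℝ) * normSq (v s) := by
  have hmaps : ∀ q ∈ (univ : Finset (Fin (m + 1))).offDiag,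
      m - q.1 + q.2 ∈ (range (2 * m + 1)).erase m := by
    intro q hq
    have : (q.1 : ℕ) ≠ q.2 := Fin.val_ne_of_ne (mem_offDiag.1 hq).2.2
    simp only [mem_erase, mem_range]
    omega
  rw [← sum_fiberwise_of_maps_to hmaps]
  refine sum_le_sum fun s hs => ?_
  have hs2m : s ≤ 2 * m := by simp only [mem_erase, mem_range] at hs; omega
  rw [sum_congr rfl fun q hq => by rw [(mem_filter.1 hq).2], sum_const, nsmul_eq_mul]
  have hcard : (#{q ∈ (univ : Finset (Fin (m + 1))).offDiag | m - q.1 + q.2 = s} : ℝ) ≤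
      (min s (2 * m - s) + 1 : ℕ) := by
    exact_mod_cast (card_le_card (filter_subset_filter _ (subset_univ _))).trans
      (card_filter_sub_add_eq_le m s)
  calc _ ≤ ((min s (2 * m - s) + 1 : ℕ) : ℝ) * (normSq (v s) / hankelWeight m s) :=
        mul_le_mul_of_nonneg_right hcard
          (div_nonneg (normSq_nonneg _) (hankelWeight_pos hs2m).le)
    _ = _ := by
      have := Nat.choose_pos hs2m
      rw [hankelWeight]
      field_simp

theorem sum_offDiag_mul_hankelWeight_le (hm : 0 < m) (Q : Fin (m + 1) → ℝ) (hQ : ∀ l, 0 ≤ Q l) :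
    ∑ q ∈ univ.offDiag, Q q.1 * Q q.2 * hankelWeight m (m - q.1 + q.2) ≤ (∑ l, Q l) ^ 2 / 2 := by
  set q₀ : Fin (m + 1) × Fin (m + 1) := (Fin.last m, 0)
  set q₁ : Fin (m + 1) × Fin (m + 1) := (0, Fin.last m)
  have hlast : Fin.last m ≠ 0 := by simp [Fin.ext_iff]; omega
  have hq₀ : q₀ ∈ univ.offDiag := by simpa [q₀] using hlast
  have hq₁ : q₁ ∈ univ.offDiag := by simpa [q₁] using hlast.symm
  have hpoint : ∀ q ∈ univ.offDiag, Q q.1 * Q q.2 * hankelWeight m (m - q.1 + q.2) ≤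
      Q q.1 * Q q.2 / 2 + (if q = q₀ then Q q.1 * Q q.2 / 2 else 0) +
        (if q = q₁ then Q q.1 * Q q.2 / 2 else 0) := by
    intro q hq
    have hQQ := mul_nonneg (hQ q.1) (hQ q.2)
    split_ifs with h₀ h₁ h₁
    · simp [h₀, q₀, q₁, hlast] at h₁
    · simp only [h₀, q₀, Fin.val_last, Fin.val_zero, Nat.sub_self, add_zero, hankelWeight_zero]
      linarith
    · simp only [h₁, q₁, Fin.val_last, Fin.val_zero, Nat.sub_zero, ← two_mul, hankelWeight_two_mul]
      linarith
    · have hne : (q.1 : ℕ) ≠ q.2 := Fin.val_ne_of_ne (mem_offDiag.1 hq).2.2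
      have h₀' : ¬ ((q.1 : ℕ) = m ∧ (q.2 : ℕ) = 0) := fun h => h₀ (by ext <;> simp [q₀, h])
      have h₁' : ¬ ((q.1 : ℕ) = 0 ∧ (q.2 : ℕ) = m) := fun h => h₁ (by ext <;> simp [q₁, h])
      have := hankelWeight_le_half (m := m) (s := m - q.1 + q.2) (by omega) (by omega) (by omega)
      nlinarith
  have hoff := sum_offDiag_mul_eq_sq_sub_sum_sq univ Q
  have hends : Q 0 ^ 2 + Q (Fin.last m) ^ 2 ≤ ∑ l, Q l ^ 2 := by
    rw [← sum_pair (f := fun l => Q l ^ 2) hlast.symm]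
    exact sum_le_sum_of_subset_of_nonneg (subset_univ _) fun l _ _ => sq_nonneg (Q l)
  calc _ ≤ _ := sum_le_sum hpoint
    _ = (∑ q ∈ univ.offDiag, Q q.1 * Q q.2) / 2 + Q (Fin.last m) * Q 0 / 2 +
          Q 0 * Q (Fin.last m) / 2 := by
      rw [sum_add_distrib, sum_add_distrib, sum_ite_eq', sum_ite_eq', if_pos hq₀, if_pos hq₁,
        sum_div]
    _ ≤ _ := by nlinarith [sq_nonneg (Q 0 - Q (Fin.last m))]

theorem two_mul_normSq_le_of_hankel (hm : 0 < m) (hp : p ≠ 0)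
    (hrel : ∀ j ≤ m, ∑ l, p l * v (j + l) = 0) :
    2 * normSq (v m) ≤
      ∑ s ∈ (range (2 * m + 1)).erase m, (Nat.choose (2 * m) s : ℝ) * normSq (v s) := by
  set S := ∑ l, normSq (p l)
  have hS : 0 < S := by
    obtain ⟨l, hl⟩ := Function.ne_iff.1 hp
    exact (normSq_pos.2 hl).trans_le (single_le_sum (fun l _ => normSq_nonneg (p l)) (mem_univ l))
  set w : Fin (m + 1) × Fin (m + 1) → ℝ := fun q => hankelWeight m (m - q.1 + q.2)
  have hw (q : Fin (m + 1) × Fin (m + 1)) : 0 < w q := hankelWeight_pos (by omega)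
  have hnorm : S * ‖v m‖ ≤ ∑ q ∈ univ.offDiag, ‖conj (p q.1) * p q.2 * v (m - q.1 + q.2)‖ := by
    calc S * ‖v m‖ = ‖∑ q ∈ univ.offDiag, conj (p q.1) * p q.2 * v (m - q.1 + q.2)‖ := by
          rw [sum_offDiag_conj_mul_mul_eq p v hrel, neg_mul, norm_neg, norm_mul, norm_real,
            Real.norm_of_nonneg hS.le]
      _ ≤ _ := norm_sum_le _ _
  have hCS := sum_sq_le_sum_mul_sum_of_sq_le_mul univ.offDiag
    (r := fun q => ‖conj (p q.1) * p q.2 * v (m - q.1 + q.2)‖)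
    (f := fun q => normSq (p q.1) * normSq (p q.2) * w q)
    (g := fun q => normSq (v (m - q.1 + q.2)) / w q)
    (fun q _ => mul_nonneg (mul_nonneg (normSq_nonneg _) (normSq_nonneg _)) (hw q).le)
    (fun q _ => div_nonneg (normSq_nonneg _) (hw q).le) fun q _ => by
      have := (hw q).ne'
      simp only [norm_mul, norm_conj, mul_pow, Complex.sq_norm]
      field_simp
      rfl
  have hf := sum_offDiag_mul_hankelWeight_le hm (fun l => normSq (p l)) fun l => normSq_nonneg _
  have hg := sum_offDiag_normSq_div_hankelWeight_le (m := m) v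
  have key : S ^ 2 * (2 * normSq (v m)) ≤ S ^ 2 *
      ∑ s ∈ (range (2 * m + 1)).erase m, (Nat.choose (2 * m) s : ℝ) * normSq (v s) := by
    calc S ^ 2 * (2 * normSq (v m)) = 2 * (S * ‖v m‖) ^ 2 := by rw [mul_pow, Complex.sq_norm]; ring
      _ ≤ 2 * ((S ^ 2 / 2) * ∑ s ∈ (range (2 * m + 1)).erase m,
            (Nat.choose (2 * m) s : ℝ) * normSq (v s)) := by
        gcongr
        refine (pow_le_pow_left₀ (by positivity) hnorm 2).trans (hCS.trans ?_)
        exact mul_le_mul hf hg (sum_nonneg fun q _ => div_nonneg (normSq_nonneg _) (hw q).le)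
          (by positivity)
      _ = _ := by ring
  exact le_of_mul_le_mul_left key (by positivity)

end Hankel

theorem exists_ne_zero_sum_mul_veroneseMoment_eq_zero {m : ℕ} (z : Fin m → ℂ × ℂ)
    (a : Fin m → ℂ) :
    ∃ p : Fin (m + 1) → ℂ, p ≠ 0 ∧ ∀ j ≤ m, ∑ l, p l * veroneseMoment m z a (j + l) = 0 := by
  set u : Fin (m + 1) → Fin m → ℂ := fun l i => (z i).1 ^ (l : ℕ) * (z i).2 ^ (m - l)
  have hdep : ¬ LinearIndependent ℂ u := fun h => by simpa using h.fintype_card_le_finrank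
  obtain ⟨p, hpu, l, hl⟩ := Fintype.not_linearIndependent_iff.1 hdep
  refine ⟨p, fun h => hl (by simp [h]), fun j hj => ?_⟩
  have hpu' (i : Fin m) : ∑ l, p l * u l i = 0 := by simpa using congrFun hpu i
  calc ∑ l, p l * veroneseMoment m z a (j + l)
      = ∑ i, a i * (z i).1 ^ j * (z i).2 ^ (m - j) * ∑ l, p l * u l i := by
        simp only [veroneseMoment, mul_sum]
        rw [sum_comm]
        refine sum_congr rfl fun i _ => sum_congr rfl fun l _ => ?_
        rw [show 2 * m - (j + l) = (m - j) + (m - l) by omega]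
        ring
    _ = 0 := by simp [hpu']

theorem two_mul_normSq_veroneseMoment_le {m : ℕ} (hm : 0 < m) (z : Fin m → ℂ × ℂ)
    (a : Fin m → ℂ) :
    2 * normSq (veroneseMoment m z a m) ≤ ∑ k ∈ (range (2 * m + 1)).erase m,
      (Nat.choose (2 * m) k : ℝ) * normSq (veroneseMoment m z a k) :=
  let ⟨_, hp, hrel⟩ := exists_ne_zero_sum_mul_veroneseMoment_eq_zero z a
  two_mul_normSq_le_of_hankel _ _ hm hp hrel

theorem InP_Rlam_of_le_choose_add_two {m : ℕ} {lam : ℝ} (hm : 0 < m)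
    (hlam : lam ≤ Nat.choose (2 * m) m + 2) : InP m (Rlam m lam) := by
  refine InP_Rlam_iff.2 fun z a => ?_
  rw [← add_sum_erase _ _ (mem_range.2 (by omega : m < 2 * m + 1))]
  nlinarith [two_mul_normSq_veroneseMoment_le hm z a, normSq_nonneg (veroneseMoment m z a m)]

/-- Theorem 3, parts 5 and 6: if `R_λ ∈ 𝒫_m(ℂ²)` then `λ ≤ binom(2m,m) + 2`;
moreover `R_λ ∈ 𝒫_m(ℂ²)` holds for `λ = binom(2m,m) + 2` while
`R_λ ∉ 𝒫_{m+1}(ℂ²)` for that value (so `𝒫_m(ℂ²) ≠ 𝒫_{m+1}(ℂ²)`); consequently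
the family `S_{λ,m} = {R_λ : λ ∈ ℝ}` has stability index `m + 1`, i.e. `m + 1`
is the least `k` such that `S ∩ 𝒫_k = S ∩ 𝒫_∞`. -/
theorem stmt18 (m : ℕ) (hm : 0 < m) :
    (∀ lam : ℝ, InP m (Rlam m lam) → lam ≤ (Nat.choose (2 * m) m : ℝ) + 2) ∧
      InP m (Rlam m ((Nat.choose (2 * m) m : ℝ) + 2)) ∧
      ¬ InP (m + 1) (Rlam m ((Nat.choose (2 * m) m : ℝ) + 2)) ∧
      IsLeast {k : ℕ | ∀ lam : ℝ,
        InP k (Rlam m lam) ↔ ∀ N : ℕ, 0 < N → InP N (Rlam m lam)} (m + 1) := by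
  have hm_mem : InP m (Rlam m ((Nat.choose (2 * m) m : ℝ) + 2)) :=
    InP_Rlam_of_le_choose_add_two hm le_rfl
  have hsucc_not_mem : ¬ InP (m + 1) (Rlam m ((Nat.choose (2 * m) m : ℝ) + 2)) := fun h => by
    linarith [le_choose_of_InP_succ_Rlam h]
  refine ⟨fun lam => le_choose_add_two_of_InP_Rlam hm, hm_mem, hsucc_not_mem,
    fun lam => ⟨fun h N _ => InP_Rlam_of_le_choose (le_choose_of_InP_succ_Rlam h) N,
      fun h => h _ m.succ_pos⟩, fun k hk => ?_⟩
  by_contra! hk_lt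
  exact hsucc_not_mem ((hk _).1 (hm_mem.mono (by omega)) _ m.succ_pos)
end
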